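/- Let p be a prime, k a real abelian number field, and k_n the n-th layer of the cyclotomic Z_p-extension k_∞ of k. Assume there exists n_0 such that for all m ≥ n ≥ n_0: (i) the arithmetic norm map N_{k_m/k_n} : H_{k_m} → H_{k_n} is an isomorphism, and (ii) Gal(k_m/k_n) acts trivially on H_{k_m}. Then for every n ≥ 0 the p-class group H_{k_n} capitulates in k_∞; that is, there exists m ≥ n such that the extension-of-classes map J_{k_m/k_n} : H_{k_n} → H_{k_m} (induced by extension of ideals) is the trivial map. -/

import Mathlib

open NumberField IntermediateField
open scoped TensorProduct nonZeroDivisors Classical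

noncomputable section

/-- A primitive `n`-th root of unity in `ℂ`. -/
def zeta (n : ℕ) : ℂ := Complex.exp (2 * Real.pi * Complex.I / n)

/-- The cyclotomic field `ℚ(ζ_n)`, realized inside `ℂ`. -/
def cyclo (n : ℕ) : IntermediateField ℚ ℂ := ℚ⟮zeta n⟯

/-- The field of real numbers, as an intermediate field of `ℂ/ℚ`. -/
def realF : IntermediateField ℚ ℂ :=
  Subfield.toIntermediateField Complex.ofRealHom.fieldRange fun q => ⟨(q : ℝ), by norm_cast⟩

/-- The maximal real subfield `ℚ(ζ_n)⁺` of the cyclotomic field `ℚ(ζ_n)`. -/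
def cycloPlus (n : ℕ) : IntermediateField ℚ ℂ := cyclo n ⊓ realF

/-- `ℚ(μ_{p^∞})⁺ = ⋃ₙ ℚ(ζ_{pⁿ})⁺`, the maximal real subfield of the `p^∞`-cyclotomic tower. -/
def cycloInfPlus (p : ℕ) : IntermediateField ℚ ℂ := (⨆ m, cyclo (p ^ m)) ⊓ realF

/-- The `p`-class group of a number field `F`:
the `p`-primary component (Sylow `p`-subgroup) of the ideal class group. -/
def pCl (p : ℕ) [Fact p.Prime] (F : IntermediateField ℚ ℂ) : Subgroup (ClassGroup (𝓞 F)) :=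
  CommGroup.primaryComponent (ClassGroup (𝓞 F)) p

instance (K : IntermediateField ℚ ℂ) [FiniteDimensional ℚ K] : NumberField K := ⟨⟩

/-!
Fix `n' = max n n₀`. The norms from higher layers onto `H_{k_{n'}}` are bijective, so every
`H_{k_m}` with `m ≥ n'` has the same order `p ^ e`, and by (ii) all its classes are invariant
under `Gal(k_m/k_{n'})`. For `m = n' + e` the identity `J ∘ N = ν` therefore says that
`J ∘ N` raises each class to the power `p ^ e = |H_{k_m}|`, i.e. kills it; since `N` is onto,
`J_{k_m/k_{n'}}` is trivial, and `J_{k_m/k_n}` factors through it.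
-/

theorem MonoidHom.eq_one_of_bijective_of_map_comp_eq_pow_card {G H : Type*} [Group G] [Group H]
    (N : H →* G) (J : G →* H) (hN : Function.Bijective N)
    (hJN : ∀ y, J (N y) = y ^ Nat.card G) (x : G) : J x = 1 := by
  obtain ⟨y, rfl⟩ := hN.2 x
  rw [hJN, ← Nat.card_eq_of_bijective N hN, pow_card_eq_one']

theorem stmt_4_general (p : ℕ) [Fact p.Prime]
    -- the layers `k_n = k·ℚ_n` of the cyclotomic `ℤ_p`-extension of `k`
    (kn : ℕ → IntermediateField ℚ ℂ)
    (hfd : ∀ n, FiniteDimensional ℚ (kn n))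
    -- the arithmetic norm maps and the extension-of-classes maps on `p`-class groups
    (N : ∀ m n, n ≤ m → (pCl p (kn m) →* pCl p (kn n)))
    (J : ∀ n m, n ≤ m → (pCl p (kn n) →* pCl p (kn m)))
    (hJtrans : ∀ n m m', ∀ h1 : n ≤ m, ∀ h2 : m ≤ m', ∀ x,
        J n m' (h1.trans h2) x = J m m' h2 (J n m h1 x))
    -- the natural Galois action on the class groups
    (act : ∀ n, (kn n ≃ₐ[ℚ] kn n) →* MulAut (ClassGroup (𝓞 (kn n))))
    -- `J ∘ N = ν` raises classes invariant under `Gal(k_m/k_n)` to the power `p^(m-n)`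
    (hJN : ∀ m n, ∀ h : n ≤ m, ∀ x : pCl p (kn m),
        (∀ σ : kn m ≃ₐ[ℚ] kn m, (∀ y : kn m, (y : ℂ) ∈ kn n → σ y = y) →
          act m σ (x : ClassGroup (𝓞 (kn m))) = x) →
        (J n m h (N m n h x) : ClassGroup (𝓞 (kn m)))
          = (x : ClassGroup (𝓞 (kn m))) ^ p ^ (m - n))
    (n0 : ℕ)
    -- (i) the arithmetic norms are isomorphisms for `m ≥ n ≥ n₀`
    (hNiso : ∀ m n, n0 ≤ n → ∀ h : n ≤ m, Function.Bijective (N m n h))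
    -- (ii) `Gal(k_m/k_n)` acts trivially on `H_{k_m}` for `m ≥ n ≥ n₀`
    (htriv : ∀ m n, n0 ≤ n → n ≤ m → ∀ x : pCl p (kn m),
        ∀ σ : kn m ≃ₐ[ℚ] kn m, (∀ y : kn m, (y : ℂ) ∈ kn n → σ y = y) →
        act m σ (x : ClassGroup (𝓞 (kn m))) = x) :
    ∀ n, ∃ m, ∃ h : n ≤ m, ∀ x : pCl p (kn n), J n m h x = 1 := by
  intro n
  set n' := max n n0
  have := hfd n'
  obtain ⟨e, he⟩ : ∃ e, Nat.card (pCl p (kn n')) = p ^ e :=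
    IsPGroup.iff_card.mp CommGroup.primaryComponent.isPGroup
  have hn'm : n' ≤ n' + e := Nat.le_add_right n' e
  have hJ_trivial : ∀ z, J n' (n' + e) hn'm z = 1 := by
    refine (N _ _ hn'm).eq_one_of_bijective_of_map_comp_eq_pow_card _
      (hNiso _ _ (le_max_right n n0) hn'm) fun y => Subtype.ext ?_
    rw [hJN _ _ hn'm y (htriv _ _ (le_max_right n n0) hn'm y), he, Nat.add_sub_cancel_left,
      SubgroupClass.coe_pow]
  refine ⟨n' + e, (le_max_left n n0).trans hn'm, fun x => ?_⟩
  rw [hJtrans n n' (n' + e) (le_max_left n n0) hn'm x, hJ_trivial]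

/-- Let `p` be a prime, `k` a real abelian number field, and `k_n` the `n`-th
layer of the cyclotomic `ℤ_p`-extension `k_∞` of `k` (so `k_n = k·ℚ_n` with `ℚ_n` the `n`-th
layer of the cyclotomic `ℤ_p`-extension of `ℚ`).  Assume there is `n₀` such that, for all
`m ≥ n ≥ n₀`, (i) the arithmetic norm `N_{k_m/k_n} : H_{k_m} → H_{k_n}` is an isomorphism
and (ii) `Gal(k_m/k_n)` acts trivially on `H_{k_m}`.  Then, for every `n ≥ 0`, the `p`-class
group `H_{k_n}` capitulates in `k_∞`: there is `m ≥ n` such that the extension-of-classes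
map `J_{k_m/k_n}` is trivial.  (The hypothesis `hJN` records the context fact that
`J ∘ N` is the algebraic norm `ν`, which raises `Gal(k_m/k_n)`-invariant classes to the
power `p^(m-n)`.) -/
theorem stmt_4 (p : ℕ) [Fact p.Prime]
    (k : IntermediateField ℚ ℂ) [FiniteDimensional ℚ k] [IsGalois ℚ k]
    (hreal : k ≤ realF)
    (habelian : ∀ σ τ : k ≃ₐ[ℚ] k, σ * τ = τ * σ)
    -- the layers `ℚ_n ⊆ ℚ(μ_{p^∞})⁺` of the cyclotomic `ℤ_p`-extension of `ℚ`
    (Qn : ℕ → IntermediateField ℚ ℂ)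
    (hQn : ∀ n, Qn n ≤ cycloInfPlus p ∧ Module.finrank ℚ (Qn n) = p ^ n)
    -- the layers `k_n = k·ℚ_n` of the cyclotomic `ℤ_p`-extension of `k`
    (kn : ℕ → IntermediateField ℚ ℂ) (hkn : ∀ n, kn n = k ⊔ Qn n)
    (hfd : ∀ n, FiniteDimensional ℚ (kn n))
    -- the arithmetic norm maps and the extension-of-classes maps on `p`-class groups
    (N : ∀ m n, n ≤ m → (pCl p (kn m) →* pCl p (kn n)))
    (J : ∀ n m, n ≤ m → (pCl p (kn n) →* pCl p (kn m)))
    (hJtrans : ∀ n m m', ∀ h1 : n ≤ m, ∀ h2 : m ≤ m', ∀ x,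
        J n m' (h1.trans h2) x = J m m' h2 (J n m h1 x))
    -- the natural Galois action on the class groups
    (act : ∀ n, (kn n ≃ₐ[ℚ] kn n) →* MulAut (ClassGroup (𝓞 (kn n))))
    -- `J ∘ N = ν` raises classes invariant under `Gal(k_m/k_n)` to the power `p^(m-n)`
    (hJN : ∀ m n, ∀ h : n ≤ m, ∀ x : pCl p (kn m),
        (∀ σ : kn m ≃ₐ[ℚ] kn m, (∀ y : kn m, (y : ℂ) ∈ kn n → σ y = y) →
          act m σ (x : ClassGroup (𝓞 (kn m))) = x) →
        (J n m h (N m n h x) : ClassGroup (𝓞 (kn m)))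
          = (x : ClassGroup (𝓞 (kn m))) ^ p ^ (m - n))
    (n0 : ℕ)
    -- (i) the arithmetic norms are isomorphisms for `m ≥ n ≥ n₀`
    (hNiso : ∀ m n, n0 ≤ n → ∀ h : n ≤ m, Function.Bijective (N m n h))
    -- (ii) `Gal(k_m/k_n)` acts trivially on `H_{k_m}` for `m ≥ n ≥ n₀`
    (htriv : ∀ m n, n0 ≤ n → n ≤ m → ∀ x : pCl p (kn m),
        ∀ σ : kn m ≃ₐ[ℚ] kn m, (∀ y : kn m, (y : ℂ) ∈ kn n → σ y = y) →
        act m σ (x : ClassGroup (𝓞 (kn m))) = x) :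
    ∀ n, ∃ m, ∃ h : n ≤ m, ∀ x : pCl p (kn n), J n m h x = 1 :=
  stmt_4_general p kn hfd N J hJtrans act hJN n0 hNiso htriv
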